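/- arXiv:1303.6977 — 2 statements merged into one kernel-verified Lean document; each statement's English description precedes it below -/
import Mathlib

section
/- If the statistic is sufficient, then the ABC acceptance rule with threshold ε = 0 samples exactly from the true posterior. Precisely: let M be a finite set of models with prior pmf β : M → ℝ (β m ≥ 0, ∑_m β m = 1), H a finite set of histories, and P : M → H → ℝ a likelihood with P m z ≥ 0 and ∑_{z∈H} P m z = 1 for each m. Fix an observed history h ∈ H with marginal φ(h) = ∑_m β m · P m h > 0, and a statistic f : H → W into any type W. Let A_0 = {z ∈ H : f z = f h} and P m (A_0) = ∑_{z∈A_0} P m z. Suppose f is sufficient, i.e. for all m ∈ M and all z, x ∈ H, f z = f x implies P m z = P m x. Then for every m ∈ M, β m · P m (A_0) / (∑_{m'} β m' · P m' (A_0)) = β m · P m h / φ(h); that is, the ABC posterior with ε = 0 equals the true posterior. -/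
/-! Under sufficiency each likelihood `P m` is constant on the acceptance set `A₀ = f⁻¹ {f h}`,
so `P m (A₀) = |A₀| · P m h`. The factor `|A₀| > 0` does not depend on `m`, hence cancels in
Bayes' formula. -/

open Finset

noncomputable def bayesPosterior {M : Type*} [Fintype M] (β L : M → ℝ) (m : M) : ℝ :=
  β m * L m / ∑ m', β m' * L m'

lemma bayesPosterior_const_mul {M : Type*} [Fintype M] (β L : M → ℝ) {c : ℝ} (hc : c ≠ 0) :
    bayesPosterior β (fun m => c * L m) = bayesPosterior β L := by
  funext m
  simp only [bayesPosterior, mul_left_comm (β _) c, ← mul_sum]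
  exact mul_div_mul_left _ _ hc

theorem abc_sufficient_statistic_exact_posterior_general
    {M H W : Type*} [Fintype M] [Fintype H] [DecidableEq W]
    (β : M → ℝ) (P : M → H → ℝ) (h : H) (f : H → W)
    (hsuff : ∀ m z x, f z = f x → P m z = P m x) :
    ∀ m : M,
      β m * (∑ z ∈ Finset.univ.filter (fun z => f z = f h), P m z) /
          (∑ m', β m' * ∑ z ∈ Finset.univ.filter (fun z => f z = f h), P m' z)
        = β m * P m h / (∑ m', β m' * P m' h) := by
  intro m
  set A := univ.filter (fun z => f z = f h)
  have hmass : ∀ m', ∑ z ∈ A, P m' z = #A * P m' h := fun m' =>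
    (sum_eq_card_nsmul fun z hz => hsuff m' z h (mem_filter.mp hz).2).trans (nsmul_eq_mul _ _)
  have hA : (#A : ℝ) ≠ 0 := Nat.cast_ne_zero.mpr (card_pos.mpr ⟨h, by simp [A]⟩).ne'
  simp only [hmass]
  exact congrFun (bayesPosterior_const_mul β (fun m => P m h) hA) m

/-- If the statistic `f` is sufficient, then the ABC posterior with threshold
`ε = 0` (acceptance set `A₀ = {z | f z = f h}`) equals the true posterior. -/
theorem abc_sufficient_statistic_exact_posterior
    {M H W : Type*} [Fintype M] [Fintype H] [DecidableEq W]
    (β : M → ℝ) (P : M → H → ℝ) (h : H) (f : H → W)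
    (hβ : ∀ m, 0 ≤ β m) (hβsum : ∑ m, β m = 1)
    (hP : ∀ m z, 0 ≤ P m z) (hPsum : ∀ m, ∑ z, P m z = 1)
    (hφ : 0 < ∑ m, β m * P m h)
    (hsuff : ∀ m z x, f z = f x → P m z = P m x) :
    ∀ m : M,
      β m * (∑ z ∈ Finset.univ.filter (fun z => f z = f h), P m z) /
          (∑ m', β m' * ∑ z ∈ Finset.univ.filter (fun z => f z = f h), P m' z)
        = β m * P m h / (∑ m', β m' * P m' h) :=
  abc_sufficient_statistic_exact_posterior_general β P h f hsuff
end

section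
/- KL bound for the ABC posterior (main theorem): let M be a finite set of models with prior pmf β : M → ℝ (β m ≥ 0, ∑_m β m = 1), H a finite set of histories, and P : M → H → ℝ a likelihood with P m z > 0 for all m, z and ∑_{z∈H} P m z = 1 for each m. Fix an observed history h ∈ H, a real normed space W, a statistic f : H → W, a threshold ε ≥ 0, and set A_ε = {z ∈ H : ‖f z − f h‖ ≤ ε} and P m (A_ε) = ∑_{z∈A_ε} P m z; let φ(h) = ∑_m β m · P m h and φ(A_ε) = ∑_m β m · P m (A_ε), and assume φ(h) > 0. Define the true posterior β(m|h) = β m · P m h / φ(h) and the ABC posterior β_ε(m|h) = β m · P m (A_ε) / φ(A_ε). Assume the likelihood is L-Lipschitz in the statistic for some L > 0: for all m ∈ M and z, x ∈ H, |ln(P m z / P m x)| ≤ L · ‖f z − f x‖. Then the KL divergence satisfies D(β(·|h) ‖ β_ε(·|h)) = ∑_{m : β m > 0} β(m|h) · ln(β(m|h)/β_ε(m|h)) ≤ ln |A_ε| + 2 L ε, where |A_ε| is the cardinality of A_ε. -/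
/-!
Both posteriors are Bayes posteriors of the same prior, for the likelihoods `P m h` and
`P m (A_ε)`. Since `h ∈ A_ε` and, by the Lipschitz condition, `P m z ≤ e^{Lε} P m h` on `A_ε`,
we have `P m h ≤ P m (A_ε) ≤ |A_ε| e^{Lε} P m h` for every model. Hence every ratio
`β(m|h) / β_ε(m|h)` is at most `|A_ε| e^{Lε}`, and so is its average logarithm.
-/

open Finset Real

theorem sum_mul_le_of_sum_eq_one {ι : Type*} {s : Finset ι} {w g : ι → ℝ} {C : ℝ}
    (hw : ∀ i ∈ s, 0 ≤ w i) (hw_sum : ∑ i ∈ s, w i = 1) (hg : ∀ i ∈ s, g i ≤ C) :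
    ∑ i ∈ s, w i * g i ≤ C :=
  calc ∑ i ∈ s, w i * g i ≤ ∑ i ∈ s, w i * C :=
        sum_le_sum fun i hi => mul_le_mul_of_nonneg_left (hg i hi) (hw i hi)
    _ = C := by rw [← sum_mul, hw_sum, one_mul]

theorem le_exp_mul_of_abs_log_div_le {a b c : ℝ} (ha : 0 < a) (hb : 0 < b)
    (h : |log (a / b)| ≤ c) : a ≤ exp c * b := by
  have hdiv : a / b ≤ exp c :=
    (log_le_iff_le_exp (div_pos ha hb)).mp ((le_abs_self _).trans h)
  exact (div_le_iff₀ hb).mp hdiv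

section Posterior

variable {M : Type*} [Fintype M] {β ℓ ℓ' : M → ℝ}

noncomputable def posterior (β ℓ : M → ℝ) (m : M) : ℝ :=
  β m * ℓ m / ∑ m', β m' * ℓ m'

theorem posterior_pos {m : M} (hm : 0 < β m) (hℓ : 0 < ℓ m) (hZ : 0 < ∑ m', β m' * ℓ m') :
    0 < posterior β ℓ m :=
  div_pos (mul_pos hm hℓ) hZ

theorem sum_posterior_of_pos (hβ : ∀ m, 0 ≤ β m) (hZ : 0 < ∑ m, β m * ℓ m) :
    ∑ m ∈ univ.filter (fun m => 0 < β m), posterior β ℓ m = 1 := by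
  have hsupport : ∑ m ∈ univ.filter (fun m => 0 < β m), β m * ℓ m = ∑ m, β m * ℓ m := by
    refine sum_subset (filter_subset _ _) fun m _ hm => ?_
    have hβm : β m = 0 := le_antisymm (not_lt.mp fun h => hm (by simp [h])) (hβ m)
    simp [hβm]
  simp only [posterior, ← sum_div, hsupport, div_self hZ.ne']

theorem posterior_div_posterior_le {K : ℝ} (hβ : ∀ m, 0 ≤ β m) (hℓ : ∀ m, 0 < ℓ m)
    (hle : ∀ m, ℓ m ≤ ℓ' m) (hle' : ∀ m, ℓ' m ≤ K * ℓ m) (hZ : 0 < ∑ m, β m * ℓ m)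
    {m : M} (hm : 0 < β m) :
    posterior β ℓ m / posterior β ℓ' m ≤ K := by
  set Z := ∑ m, β m * ℓ m
  set Z' := ∑ m, β m * ℓ' m
  have hZ_le : Z ≤ Z' := sum_le_sum fun m _ => mul_le_mul_of_nonneg_left (hle m) (hβ m)
  have hZ'_le : Z' ≤ K * Z := by
    rw [mul_sum]
    exact sum_le_sum fun m _ => by nlinarith [hle' m, hβ m]
  have hℓ'm : 0 < ℓ' m := (hℓ m).trans_le (hle m)
  have hratio : posterior β ℓ m / posterior β ℓ' m = ℓ m / ℓ' m * (Z' / Z) := by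
    change β m * ℓ m / Z / (β m * ℓ' m / Z') = _
    field_simp [hm.ne', hℓ'm.ne', hZ.ne', (hZ.trans_le hZ_le).ne']
  rw [hratio]
  calc ℓ m / ℓ' m * (Z' / Z) ≤ 1 * (Z' / Z) :=
        mul_le_mul_of_nonneg_right ((div_le_one hℓ'm).mpr (hle m))
          (div_nonneg (hZ.le.trans hZ_le) hZ.le)
    _ ≤ K := by rw [one_mul]; exact (div_le_iff₀ hZ).mpr hZ'_le

theorem sum_posterior_mul_log_div_le {K : ℝ} (hβ : ∀ m, 0 ≤ β m) (hℓ : ∀ m, 0 < ℓ m)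
    (hle : ∀ m, ℓ m ≤ ℓ' m) (hle' : ∀ m, ℓ' m ≤ K * ℓ m) (hZ : 0 < ∑ m, β m * ℓ m) :
    ∑ m ∈ univ.filter (fun m => 0 < β m),
        posterior β ℓ m * log (posterior β ℓ m / posterior β ℓ' m) ≤ log K := by
  have hZ' : 0 < ∑ m, β m * ℓ' m :=
    hZ.trans_le (sum_le_sum fun m _ => mul_le_mul_of_nonneg_left (hle m) (hβ m))
  refine sum_mul_le_of_sum_eq_one
    (fun m _ => div_nonneg (mul_nonneg (hβ m) (hℓ m).le) hZ.le)
    (sum_posterior_of_pos hβ hZ) fun m hm => ?_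
  have hβm : 0 < β m := (mem_filter.mp hm).2
  exact log_le_log
    (div_pos (posterior_pos hβm (hℓ m) hZ) (posterior_pos hβm ((hℓ m).trans_le (hle m)) hZ'))
    (posterior_div_posterior_le hβ hℓ hle hle' hZ hβm)

end Posterior

theorem sum_le_card_mul_exp_mul {H W : Type*} [SeminormedAddCommGroup W] {p : H → ℝ}
    {f : H → W} {h : H} {L ε : ℝ} {A : Finset H} (hp : ∀ z, 0 < p z) (hL : 0 ≤ L)
    (hLip : ∀ z, |log (p z / p h)| ≤ L * ‖f z - f h‖) (hA : ∀ z ∈ A, ‖f z - f h‖ ≤ ε) :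
    ∑ z ∈ A, p z ≤ #A * (exp (L * ε) * p h) := by
  rw [← nsmul_eq_mul]
  refine sum_le_card_nsmul _ _ _ fun z hz => ?_
  calc p z ≤ exp (L * ‖f z - f h‖) * p h := le_exp_mul_of_abs_log_div_le (hp z) (hp h) (hLip z)
    _ ≤ exp (L * ε) * p h := by gcongr; exacts [(hp h).le, hA z hz]

theorem abc_posterior_kl_bound_general
    {M H W : Type*} [Fintype M] [Fintype H]
    [NormedAddCommGroup W] [NormedSpace ℝ W]
    (β : M → ℝ) (P : M → H → ℝ) (h : H) (f : H → W) (ε L : ℝ)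
    (hβ : ∀ m, 0 ≤ β m)
    (hP : ∀ m z, 0 < P m z)
    (hε : 0 ≤ ε) (hL : 0 < L)
    (hφ : 0 < ∑ m, β m * P m h)
    (hLip : ∀ m z x, |Real.log (P m z / P m x)| ≤ L * ‖f z - f x‖) :
    (∑ m ∈ Finset.univ.filter (fun m : M => 0 < β m),
        (β m * P m h / (∑ m', β m' * P m' h)) *
          Real.log ((β m * P m h / (∑ m', β m' * P m' h)) /
            (β m * (∑ z ∈ Finset.univ.filter (fun z : H => ‖f z - f h‖ ≤ ε), P m z) /
              (∑ m', β m' *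
                ∑ z ∈ Finset.univ.filter (fun z : H => ‖f z - f h‖ ≤ ε), P m' z))))
      ≤ Real.log ((Finset.univ.filter (fun z : H => ‖f z - f h‖ ≤ ε)).card : ℝ)
          + 2 * L * ε := by
  set A := univ.filter (fun z : H => ‖f z - f h‖ ≤ ε)
  have hhA : h ∈ A := by simp [A, hε]
  have hA : ∀ z ∈ A, ‖f z - f h‖ ≤ ε := fun z hz => (mem_filter.mp hz).2
  have hcard : (0 : ℝ) < #A := by exact_mod_cast card_pos.mpr ⟨h, hhA⟩
  calc _ ≤ log (#A * exp (L * ε)) :=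
        sum_posterior_mul_log_div_le (ℓ := fun m => P m h) (ℓ' := fun m => ∑ z ∈ A, P m z) hβ
          (fun m => hP m h) (fun m => single_le_sum (fun z _ => (hP m z).le) hhA)
          (fun m => (sum_le_card_mul_exp_mul (hP m) hL.le (fun z => hLip m z h) hA).trans_eq
            (mul_assoc _ _ _).symm) hφ
    _ = log #A + L * ε := by rw [log_mul hcard.ne' (exp_ne_zero _), log_exp]
    _ ≤ log #A + 2 * L * ε := by nlinarith

/-- KL bound for the ABC posterior: under the Lipschitz (smoothness) assumption
on the likelihood with constant `L > 0`, the KL divergence between the true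
posterior `β(·|h)` and the ABC posterior `β_ε(·|h)` is at most
`ln |A_ε| + 2 L ε`. -/
theorem abc_posterior_kl_bound
    {M H W : Type*} [Fintype M] [Fintype H]
    [NormedAddCommGroup W] [NormedSpace ℝ W]
    (β : M → ℝ) (P : M → H → ℝ) (h : H) (f : H → W) (ε L : ℝ)
    (hβ : ∀ m, 0 ≤ β m) (hβsum : ∑ m, β m = 1)
    (hP : ∀ m z, 0 < P m z) (hPsum : ∀ m, ∑ z, P m z = 1)
    (hε : 0 ≤ ε) (hL : 0 < L)
    (hφ : 0 < ∑ m, β m * P m h)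
    (hLip : ∀ m z x, |Real.log (P m z / P m x)| ≤ L * ‖f z - f x‖) :
    (∑ m ∈ Finset.univ.filter (fun m : M => 0 < β m),
        (β m * P m h / (∑ m', β m' * P m' h)) *
          Real.log ((β m * P m h / (∑ m', β m' * P m' h)) /
            (β m * (∑ z ∈ Finset.univ.filter (fun z : H => ‖f z - f h‖ ≤ ε), P m z) /
              (∑ m', β m' *
                ∑ z ∈ Finset.univ.filter (fun z : H => ‖f z - f h‖ ≤ ε), P m' z))))
      ≤ Real.log ((Finset.univ.filter (fun z : H => ‖f z - f h‖ ≤ ε)).card : ℝ)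
          + 2 * L * ε :=
  abc_posterior_kl_bound_general β P h f ε L hβ hP hε hL hφ hLip
end
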